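/- arXiv:1801.00480 — 2 statements merged into one kernel-verified Lean document; each statement's English description precedes it below -/
import Mathlib

section
/- Let C_i ⊆ H, i = 0,...,m-1, be nonempty closed convex sets with int(∩_{i=0}^{m-1} C_i) ≠ ∅, and fix r ∈ {2,...,m-1}. Define S_d := T_{C_{((r-1)d-(r-1)) mod m},...,C_{((r-1)d) mod m}} (the r-sets-DR operator on the corresponding sets) and Q := S_m ∘ ... ∘ S_2 ∘ S_1. Then Fix(Q) = ∩_{i=0}^{m-1} C_i. -/
/-!
Reflections `2 P_C - Id` in convex sets, their compositions and the averages `½(Id + N)` of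
those never increase the distance to a point of `K = ⋂ C_i`. For such maps a fixed point of a
composition is fixed by every factor, provided points are determined by their distances to `K`;
in a Hilbert space this holds once `K` has an interior point, because being equidistant from
`a` and `b` is an affine condition on `z`. Peeling `Q` and then each `S_d` in this way, a fixed
point of `Q` is fixed by every reflection, hence lies in every `C_i`, since the index windows
`(r-1)(d-1), …, (r-1)(d-1) + r-1`, `d = 1, …, m`, cover `0, …, m-1`.
-/

open scoped RealInnerProductSpace

section Fold

variable {X : Type*} [PseudoMetricSpace X]

def QuasiNonexpansiveTo (T : X → X) (B : Set X) : Prop :=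
  ∀ x, ∀ z ∈ B, dist (T x) z ≤ dist x z

def IsResolvingSet (B : Set X) : Prop :=
  ∀ a b, (∀ z ∈ B, dist a z = dist b z) → a = b

theorem QuasiNonexpansiveTo.mono {T : X → X} {B B' : Set X} (hT : QuasiNonexpansiveTo T B)
    (h : B' ⊆ B) : QuasiNonexpansiveTo T B' :=
  fun x z hz => hT x z (h hz)

theorem Fin.foldl_eq_self {α : Type*} {n : ℕ} {f : α → Fin n → α} {x : α}
    (h : ∀ j, f x j = x) : Fin.foldl n f x = x := by
  induction n with
  | zero => simp
  | succ n ih => rw [Fin.foldl_succ, h 0]; exact ih fun j => h j.succ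

theorem QuasiNonexpansiveTo.foldl {n : ℕ} {f : X → Fin n → X} {B : Set X}
    (hf : ∀ j, QuasiNonexpansiveTo (f · j) B) :
    QuasiNonexpansiveTo (Fin.foldl n f) B := by
  induction n with
  | zero => intro x z _; simp
  | succ n ih =>
    intro x z hz
    rw [Fin.foldl_succ]
    exact (ih (fun j => hf j.succ) _ z hz).trans (hf 0 x z hz)

/-- If the first map moved `x`, the remaining ones would have to bring it back to its original
distance from every point of `B`, so the first map would not have changed those distances. -/
theorem Fin.foldl_eq_self_iff {n : ℕ} {f : X → Fin n → X} {B : Set X} (hB : IsResolvingSet B)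
    (hf : ∀ j, QuasiNonexpansiveTo (f · j) B) {x : X} :
    Fin.foldl n f x = x ↔ ∀ j, f x j = x := by
  refine ⟨fun hx => ?_, Fin.foldl_eq_self⟩
  induction n with
  | zero => exact fun j => j.elim0
  | succ n ih =>
    rw [Fin.foldl_succ] at hx
    have hrest := QuasiNonexpansiveTo.foldl (fun j => hf j.succ) (f x 0)
    have h0 : f x 0 = x := hB _ _ fun z hz =>
      le_antisymm (hf 0 x z hz) (by simpa only [hx] using hrest z hz)
    rw [h0] at hx
    exact Fin.cases h0 (ih (fun j => hf j.succ) hx)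

end Fold

section Normed

variable {E : Type*} [NormedAddCommGroup E]

def IsMetricProjection (K : Set E) (p : E → E) : Prop :=
  ∀ x, p x ∈ K ∧ ∀ y ∈ K, ‖x - p x‖ ≤ ‖x - y‖

theorem IsMetricProjection.apply_eq_self_iff {K : Set E} {p : E → E} (hp : IsMetricProjection K p)
    {x : E} : p x = x ↔ x ∈ K := by
  refine ⟨fun h => h ▸ (hp x).1, fun hx => ?_⟩
  have h := (hp x).2 x hx
  rw [sub_self, norm_zero, norm_le_zero_iff, sub_eq_zero] at h
  exact h.symm

variable [NormedSpace ℝ E]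

theorem half_smul_add_eq_self_iff {x y : E} : (1 / 2 : ℝ) • (x + y) = x ↔ y = x := by
  rw [one_div, inv_smul_eq_iff₀ two_ne_zero, two_smul, add_right_inj]

theorem two_smul_sub_eq_self_iff {x y : E} : (2 : ℝ) • y - x = x ↔ y = x := by
  rw [sub_eq_iff_eq_add, ← two_smul ℝ x]
  exact (smul_right_injective E two_ne_zero).eq_iff

theorem QuasiNonexpansiveTo.half_smul_id_add {N : E → E} {B : Set E}
    (hN : QuasiNonexpansiveTo N B) : QuasiNonexpansiveTo (fun y => (1 / 2 : ℝ) • (y + N y)) B := by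
  intro y z hz
  have hNz := hN y z hz
  simp only [dist_eq_norm] at hNz ⊢
  calc ‖(1 / 2 : ℝ) • (y + N y) - z‖ = (1 / 2) * ‖(y - z) + (N y - z)‖ := by
        rw [← norm_smul_of_nonneg (by norm_num)]
        congr 1
        module
    _ ≤ (1 / 2) * (‖y - z‖ + ‖N y - z‖) := by gcongr; exact norm_add_le _ _
    _ ≤ ‖y - z‖ := by linarith

end Normed

section InnerProduct

variable {H : Type*} [NormedAddCommGroup H] [InnerProductSpace ℝ H]

theorem eq_zero_of_forall_inner_eq_of_mem_interior {B : Set H} {v z₀ : H}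
    (hz₀ : z₀ ∈ interior B) (h : ∀ z ∈ B, ⟪v, z⟫ = ⟪v, z₀⟫) : v = 0 := by
  have hline : Filter.Tendsto (fun t : ℝ => z₀ + t • v) (nhdsWithin 0 {0}ᶜ) (nhds z₀) := by
    have : Continuous fun t : ℝ => z₀ + t • v := by fun_prop
    simpa using (this.tendsto 0).mono_left nhdsWithin_le_nhds
  obtain ⟨t, htB, ht⟩ :=
    ((hline.eventually_mem (mem_interior_iff_mem_nhds.mp hz₀)).and self_mem_nhdsWithin).exists
  have := h _ htB
  rw [inner_add_right, inner_smul_right, real_inner_self_eq_norm_sq, add_eq_left,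
    mul_eq_zero, pow_eq_zero_iff two_ne_zero, norm_eq_zero] at this
  exact this.resolve_left ht

theorem isResolvingSet_of_interior_nonempty {B : Set H} (hB : (interior B).Nonempty) :
    IsResolvingSet B := by
  obtain ⟨z₀, hz₀⟩ := hB
  intro a b hab
  have hsq : ∀ z ∈ B, ⟪a - b, z⟫ = (‖a‖ ^ 2 - ‖b‖ ^ 2) / 2 := by
    intro z hz
    have := hab z hz
    rw [dist_eq_norm, dist_eq_norm] at this
    have h2 := congrArg (· ^ 2) this
    simp only [norm_sub_sq_real, inner_sub_left] at h2 ⊢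
    linarith
  exact sub_eq_zero.mp <| eq_zero_of_forall_inner_eq_of_mem_interior hz₀ fun z hz =>
    (hsq z hz).trans (hsq z₀ (interior_subset hz₀)).symm

namespace IsMetricProjection

variable {K : Set H} {p : H → H}

theorem inner_sub_le_zero (hp : IsMetricProjection K p) (hK : Convex ℝ K) (x : H) {w : H}
    (hw : w ∈ K) : ⟪x - p x, w - p x⟫ ≤ 0 := by
  have : Nonempty K := ⟨⟨w, hw⟩⟩
  have hinf : ‖x - p x‖ = ⨅ y : K, ‖x - y‖ :=
    le_antisymm (le_ciInf fun y => (hp x).2 y y.2)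
      (ciInf_le (f := fun y : K => ‖x - y‖) ⟨0, by rintro _ ⟨y, rfl⟩; exact norm_nonneg _⟩
        ⟨p x, (hp x).1⟩)
  exact (norm_eq_iInf_iff_real_inner_le_zero hK (hp x).1).mp hinf w hw

theorem quasiNonexpansiveTo_reflection (hp : IsMetricProjection K p) (hK : Convex ℝ K) :
    QuasiNonexpansiveTo (fun y => (2 : ℝ) • p y - y) K := by
  intro y z hz
  rw [dist_eq_norm, dist_eq_norm]
  have hangle := hp.inner_sub_le_zero hK y hz
  have hsq : ‖(2 : ℝ) • p y - y - z‖ ^ 2 = ‖y - z‖ ^ 2 + 4 * ⟪y - p y, z - p y⟫ := by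
    rw [show (2 : ℝ) • p y - y - z = (p y - z) - (y - p y) by module,
      show y - z = (y - p y) + (p y - z) by abel, norm_sub_sq_real, norm_add_sq_real,
      show z - p y = -(p y - z) by abel, inner_neg_right, real_inner_comm]
    ring
  exact pow_le_pow_iff_left₀ (norm_nonneg _) (norm_nonneg _) two_ne_zero |>.mp (by linarith)

end IsMetricProjection

end InnerProduct

theorem fixedPoints_cyclic_rSetsDR_general
    {H : Type*} [NormedAddCommGroup H] [InnerProductSpace ℝ H]
    (m r : ℕ) (hr : 2 ≤ r)
    (C : ℕ → Set H)
    (hcv : ∀ i < m, Convex ℝ (C i))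
    (hint : (interior (⋂ i ∈ Finset.range m, C i)).Nonempty)
    (P : ℕ → H → H)
    (hP : ∀ i < m, ∀ x : H, P i x ∈ C i ∧ ∀ y ∈ C i, ‖x - P i x‖ ≤ ‖x - y‖)
    (S : ℕ → H → H)
    -- `S d` is the `r`-sets-DR operator on the sets `C_{((r-1)(d-1)+j) mod m}`, `j = 0,…,r-1`
    (hS : ∀ d : ℕ, ∀ x : H, S d x = (1 / 2 : ℝ) • (x +
      Fin.foldl r (fun y (j : Fin r) => (2 : ℝ) • P (((r - 1) * (d - 1) + j.val) % m) y - y) x))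
    (Q : H → H)
    -- `Q = S m ∘ ⋯ ∘ S 2 ∘ S 1` (applying `S 1` first)
    (hQ : ∀ x : H, Q x = Fin.foldl m (fun y (d : Fin m) => S (d.val + 1) y) x) :
    Function.fixedPoints Q = ⋂ i ∈ Finset.range m, C i := by
  set K := ⋂ i ∈ Finset.range m, C i
  have hK : IsResolvingSet K := isResolvingSet_of_interior_nonempty hint
  have hP' : ∀ i < m, IsMetricProjection (C i) (P i) := hP
  have hidx (d : Fin m) (j : ℕ) : ((r - 1) * d + j) % m < m := Nat.mod_lt _ d.pos
  have hR (d : Fin m) (j : Fin r) :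
      QuasiNonexpansiveTo (fun y => (2 : ℝ) • P (((r - 1) * d + j) % m) y - y) K :=
    ((hP' _ (hidx d j)).quasiNonexpansiveTo_reflection (hcv _ (hidx d j))).mono
      (Set.biInter_subset_of_mem (Finset.mem_range.mpr (hidx d j)))
  have hS' (d : Fin m) : S (d + 1) = fun y => (1 / 2 : ℝ) • (y +
      Fin.foldl r (fun y (j : Fin r) => (2 : ℝ) • P (((r - 1) * d + j) % m) y - y) y) := by
    funext y; simp only [hS, Nat.add_sub_cancel]
  have hSfix (d : Fin m) (x : H) :
      S (d + 1) x = x ↔ ∀ j : Fin r, x ∈ C (((r - 1) * d + j) % m) := by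
    rw [hS', half_smul_add_eq_self_iff, Fin.foldl_eq_self_iff hK (hR d)]
    exact forall_congr' fun j =>
      two_smul_sub_eq_self_iff.trans (hP' _ (hidx d j)).apply_eq_self_iff
  ext x
  rw [Function.mem_fixedPoints, Function.IsFixedPt, hQ, Fin.foldl_eq_self_iff hK fun d => by
    simpa only [hS'] using (QuasiNonexpansiveTo.foldl (hR d)).half_smul_id_add]
  simp only [hSfix, K, Set.mem_iInter, Finset.mem_range]
  refine ⟨fun h i hi => ?_, fun h d j => h _ (hidx d j)⟩
  have hd : i / (r - 1) < m := (Nat.div_le_self _ _).trans_lt hi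
  have hj : i % (r - 1) < r := (Nat.mod_lt _ (by omega)).trans (by omega)
  simpa only [Nat.div_add_mod, Nat.mod_eq_of_lt hi] using h ⟨_, hd⟩ ⟨_, hj⟩

/-- For nonempty closed convex sets `C₀,…,C_{m-1}` with `int(⋂ C_i) ≠ ∅` and
`r ∈ {2,…,m-1}`, the operator `Q = S_m ∘ ⋯ ∘ S_1`, where
`S_d` is the `r`-sets-DR operator on `C_{((r-1)d-(r-1)) mod m}, …, C_{((r-1)d) mod m}`,
satisfies `Fix(Q) = ⋂_{i=0}^{m-1} C_i`. -/
theorem fixedPoints_cyclic_rSetsDR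
    {H : Type*} [NormedAddCommGroup H] [InnerProductSpace ℝ H] [CompleteSpace H]
    (m r : ℕ) (hr : 2 ≤ r) (hrm : r ≤ m - 1)
    (C : ℕ → Set H)
    (hne : ∀ i < m, (C i).Nonempty) (hcl : ∀ i < m, IsClosed (C i))
    (hcv : ∀ i < m, Convex ℝ (C i))
    (hint : (interior (⋂ i ∈ Finset.range m, C i)).Nonempty)
    (P : ℕ → H → H)
    (hP : ∀ i < m, ∀ x : H, P i x ∈ C i ∧ ∀ y ∈ C i, ‖x - P i x‖ ≤ ‖x - y‖)
    (S : ℕ → H → H)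
    -- `S d` is the `r`-sets-DR operator on the sets `C_{((r-1)(d-1)+j) mod m}`, `j = 0,…,r-1`
    (hS : ∀ d : ℕ, ∀ x : H, S d x = (1 / 2 : ℝ) • (x +
      Fin.foldl r (fun y (j : Fin r) => (2 : ℝ) • P (((r - 1) * (d - 1) + j.val) % m) y - y) x))
    (Q : H → H)
    -- `Q = S m ∘ ⋯ ∘ S 2 ∘ S 1` (applying `S 1` first)
    (hQ : ∀ x : H, Q x = Fin.foldl m (fun y (d : Fin m) => S (d.val + 1) y) x) :
    Function.fixedPoints Q = ⋂ i ∈ Finset.range m, C i :=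
  fixedPoints_cyclic_rSetsDR_general m r hr C hcv hint P hP S hS Q hQ
end

section
/- Let h₁,...,h_k be averaged operators on a real Hilbert space with ∩_{j=1}^k Fix(h_j) ≠ ∅. Then Fix(h_k ∘ ... ∘ h_1) = ∩_{j=1}^k Fix(h_j). -/
/-!
An averaged map `f = (1 - c) Id + c N` with a fixed point `p` moves every non-fixed point strictly
closer to `p`: `x` and `N x` lie in the closed ball around `p` of radius `dist x p`, and by strict
convexity of the norm a proper convex combination of two distinct points of that ball lies in the
open ball. Maps with this property at a common point `p` form a class closed under composition,
and a composition `g ∘ f` can fix `x` only if `dist x p = dist (f x) p`, forcing `f x = x` and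
then `g x = x`.
-/

open Metric

def IsStrictlyQuasiNonexpansiveAt {X : Type*} [PseudoMetricSpace X] (f : X → X) (p : X) : Prop :=
  ∀ x, f x = x ∨ dist (f x) p < dist x p

def IsAveraged {E : Type*} [NormedAddCommGroup E] [NormedSpace ℝ E] (f : E → E) : Prop :=
  ∃ c ∈ Set.Ioo (0 : ℝ) 1, ∃ N : E → E,
    (∀ x y : E, ‖N x - N y‖ ≤ ‖x - y‖) ∧ ∀ x : E, f x = (1 - c) • x + c • N x

namespace IsStrictlyQuasiNonexpansiveAt

variable {X : Type*} [PseudoMetricSpace X] {f g : X → X} {p : X}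

theorem dist_le (hf : IsStrictlyQuasiNonexpansiveAt f p) (x : X) : dist (f x) p ≤ dist x p := by
  rcases hf x with hx | hx
  · rw [hx]
  · exact hx.le

theorem comp (hg : IsStrictlyQuasiNonexpansiveAt g p) (hf : IsStrictlyQuasiNonexpansiveAt f p) :
    IsStrictlyQuasiNonexpansiveAt (g ∘ f) p := by
  intro x
  rcases hf x with hfx | hfx
  · simpa only [Function.comp_apply, hfx] using hg x
  · exact Or.inr ((hg.dist_le (f x)).trans_lt hfx)

theorem comp_apply_eq_self_iff (hg : IsStrictlyQuasiNonexpansiveAt g p)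
    (hf : IsStrictlyQuasiNonexpansiveAt f p) (x : X) : g (f x) = x ↔ f x = x ∧ g x = x := by
  refine ⟨fun hgfx => ?_, fun ⟨hfx, hgx⟩ => by rw [hfx, hgx]⟩
  have hfx : f x = x := (hf x).resolve_right fun hlt =>
    (hgfx ▸ hg.dist_le (f x)).not_gt hlt
  rw [hfx] at hgfx
  exact ⟨hfx, hgfx⟩

variable {k : ℕ} {h : Fin k → X → X}

theorem foldl (hh : ∀ j, IsStrictlyQuasiNonexpansiveAt (h j) p) :
    IsStrictlyQuasiNonexpansiveAt (fun x => Fin.foldl k (fun y j => h j y) x) p := by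
  induction k with
  | zero => exact fun _ => Or.inl rfl
  | succ k ih =>
    simp only [Fin.foldl_succ_last]
    exact (hh (Fin.last k)).comp (ih fun j => hh j.castSucc)

theorem foldl_eq_self_iff (hh : ∀ j, IsStrictlyQuasiNonexpansiveAt (h j) p) (x : X) :
    Fin.foldl k (fun y j => h j y) x = x ↔ ∀ j, h j x = x := by
  induction k with
  | zero => simp only [Fin.foldl_zero, IsEmpty.forall_iff]
  | succ k ih =>
    rw [Fin.foldl_succ_last, Fin.forall_fin_succ',
      (hh (Fin.last k)).comp_apply_eq_self_iff (foldl fun j => hh j.castSucc),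
      ih fun j => hh j.castSucc]

end IsStrictlyQuasiNonexpansiveAt

theorem IsAveraged.isStrictlyQuasiNonexpansiveAt {E : Type*} [NormedAddCommGroup E]
    [NormedSpace ℝ E] [StrictConvexSpace ℝ E] {f : E → E} (hf : IsAveraged f) {p : E}
    (hp : f p = p) : IsStrictlyQuasiNonexpansiveAt f p := by
  obtain ⟨c, ⟨hc0, hc1⟩, N, hN, hfN⟩ := hf
  have hNp : N p = p := smul_right_injective E hc0.ne' <| by
    rw [hfN] at hp
    linear_combination (norm := module) hp
  intro x
  rw [hfN]
  rcases eq_or_ne x (N x) with hNx | hNx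
  · exact Or.inl (by rw [← hNx, ← add_smul, sub_add_cancel, one_smul])
  · refine Or.inr (mem_ball.1 (combo_mem_ball_of_ne (mem_closedBall.2 le_rfl) ?_ hNx
      (sub_pos.2 hc1) hc0 (sub_add_cancel 1 c)))
    rw [mem_closedBall, dist_eq_norm, dist_eq_norm]
    simpa only [hNp] using hN x p

theorem fixedPoints_comp_finitely_many_averaged_general
    {H : Type*} [NormedAddCommGroup H] [InnerProductSpace ℝ H]
    (k : ℕ) (h : Fin k → H → H)
    (hav : ∀ j, ∃ c ∈ Set.Ioo (0 : ℝ) 1, ∃ N : H → H,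
      (∀ x y : H, ‖N x - N y‖ ≤ ‖x - y‖) ∧ ∀ x : H, h j x = (1 - c) • x + c • N x)
    (hfix : (⋂ j, Function.fixedPoints (h j)).Nonempty) :
    -- `Fin.foldl` applies `h 0` first and `h (k-1)` last, i.e. `h_k ∘ ⋯ ∘ h_1`
    Function.fixedPoints (fun x => Fin.foldl k (fun y j => h j y) x) =
      ⋂ j, Function.fixedPoints (h j) := by
  obtain ⟨p, hp⟩ := hfix
  have hq : ∀ j, IsStrictlyQuasiNonexpansiveAt (h j) p := fun j =>
    IsAveraged.isStrictlyQuasiNonexpansiveAt (hav j) (Set.mem_iInter.1 hp j)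
  ext x
  simpa only [Function.mem_fixedPoints, Function.IsFixedPt, Set.mem_iInter] using
    IsStrictlyQuasiNonexpansiveAt.foldl_eq_self_iff hq x

/-- If `h₁,…,h_k` are averaged operators on a real Hilbert space with
`⋂ Fix(h_j) ≠ ∅`, then `Fix(h_k ∘ ⋯ ∘ h_1) = ⋂_{j=1}^k Fix(h_j)`. -/
theorem fixedPoints_comp_finitely_many_averaged
    {H : Type*} [NormedAddCommGroup H] [InnerProductSpace ℝ H] [CompleteSpace H]
    (k : ℕ) (hk : 1 ≤ k) (h : Fin k → H → H)
    (hav : ∀ j, ∃ c ∈ Set.Ioo (0 : ℝ) 1, ∃ N : H → H,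
      (∀ x y : H, ‖N x - N y‖ ≤ ‖x - y‖) ∧ ∀ x : H, h j x = (1 - c) • x + c • N x)
    (hfix : (⋂ j, Function.fixedPoints (h j)).Nonempty) :
    -- `Fin.foldl` applies `h 0` first and `h (k-1)` last, i.e. `h_k ∘ ⋯ ∘ h_1`
    Function.fixedPoints (fun x => Fin.foldl k (fun y j => h j y) x) =
      ⋂ j, Function.fixedPoints (h j) :=
  fixedPoints_comp_finitely_many_averaged_general k h hav hfix
end
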